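/- Let G be a group acting on a ring B by ring automorphisms, with invariant subring A = B^G. If G is finite and B is an integral domain, then B is integral over A, and hence the map Spec B → Spec A is surjective; moreover G acts transitively on the fibers of Spec B → Spec A. -/

import Mathlib

/-- The subring of fixed points of a multiplicative semiring action of a group. -/
def fixedSubring (G B : Type*) [Monoid G] [CommRing B] [MulSemiringAction G B] :
    Subring B where
  carrier := {b : B | ∀ g : G, g • b = b}
  mul_mem' := fun {a b} ha hb g => by rw [smul_mul', ha g, hb g]
  one_mem' := fun g => smul_one g
  add_mem' := fun {a b} ha hb g => by rw [smul_add, ha g, hb g]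
  zero_mem' := fun g => smul_zero g
  neg_mem' := fun {a} ha g => by rw [smul_neg, ha g]

open Pointwise

namespace fixedSubring

variable (G B : Type*) [Group G] [CommRing B] [MulSemiringAction G B]

instance : SMulCommClass G (fixedSubring G B) B where
  smul_comm g a b := by
    rw [Subring.smul_def, Subring.smul_def, smul_eq_mul, smul_eq_mul, smul_mul', a.2 g]

instance : Algebra.IsInvariant (fixedSubring G B) B G where
  isInvariant b hb := ⟨⟨b, hb⟩, rfl⟩

end fixedSubring

theorem finite_group_action_integral_surjective_transitive_general
    (G B : Type*) [Group G] [Finite G] [CommRing B]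
    [MulSemiringAction G B] :
    Algebra.IsIntegral (fixedSubring G B) B ∧
    Function.Surjective
      (PrimeSpectrum.comap (algebraMap (fixedSubring G B) B)) ∧
    ∀ P Q : PrimeSpectrum B,
      PrimeSpectrum.comap (algebraMap (fixedSubring G B) B) P =
        PrimeSpectrum.comap (algebraMap (fixedSubring G B) B) Q →
      ∃ g : G, ∀ b : B, b ∈ P.asIdeal ↔ g • b ∈ Q.asIdeal := by
  have hint := Algebra.IsInvariant.isIntegral (fixedSubring G B) B G
  refine ⟨hint, Algebra.IsIntegral.comap_surjective _ _, fun P Q hPQ => ?_⟩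
  obtain ⟨g, hQ⟩ := Algebra.IsInvariant.exists_smul_of_under_eq (fixedSubring G B) B G
    P.asIdeal Q.asIdeal (congrArg PrimeSpectrum.asIdeal hPQ)
  exact ⟨g, fun b => by rw [hQ, Ideal.smul_mem_pointwise_smul_iff]⟩

theorem finite_group_action_integral_surjective_transitive
    (G B : Type*) [Group G] [Finite G] [CommRing B] [IsDomain B]
    [MulSemiringAction G B] :
    Algebra.IsIntegral (fixedSubring G B) B ∧
    Function.Surjective
      (PrimeSpectrum.comap (algebraMap (fixedSubring G B) B)) ∧
    ∀ P Q : PrimeSpectrum B,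
      PrimeSpectrum.comap (algebraMap (fixedSubring G B) B) P =
        PrimeSpectrum.comap (algebraMap (fixedSubring G B) B) Q →
      ∃ g : G, ∀ b : B, b ∈ P.asIdeal ↔ g • b ∈ Q.asIdeal :=
  finite_group_action_integral_surjective_transitive_general G B
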